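/- Let K = ℚ(√5) and t = 1 + √5 ∈ K. Then the Weierstrass curves C_{25,1}(t,1) and C_{25,3}(t,1) over K have nonzero discriminants, their discriminants satisfy 5¹²·Δ(C_{25,1}(t,1)) = Δ(C_{25,3}(t,1)), their j-invariants are equal, and yet there is no change of variables (x,y) ↦ (u²x + r, u³y + su²x + w) with u ∈ K^×, r, s, w ∈ K transforming C_{25,1}(t,1) into C_{25,3}(t,1); that is, C_{25,1}(t,1) and C_{25,3}(t,1) are not isomorphic over K. -/

import Mathlib

noncomputable section

/-- The polynomial `S2`. -/
def S2 {K : Type*} [Field K] (t : K) : K := t ^ 2 + 4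

/-- The polynomial `S4`. -/
def S4 {K : Type*} [Field K] (t : K) : K := t ^ 10 + 240 * t ^ 9 + 2170 * t ^ 8 + 8880 * t ^ 7 + 34835 * t ^ 6 + 83748 * t ^ 5 + 206210 * t ^ 4 + 313380 * t ^ 3 + 503545 * t ^ 2 + 424740 * t + 375376

/-- The polynomial `S5`. -/
def S5 {K : Type*} [Field K] (t : K) : K := t ^ 4 + 6 * t ^ 3 + 21 * t ^ 2 + 36 * t + 61

/-- The polynomial `S6`. -/
def S6 {K : Type*} [Field K] (t : K) : K := t ^ 10 - 510 * t ^ 9 - 13580 * t ^ 8 - 36870 * t ^ 7 - 190915 * t ^ 6 - 393252 * t ^ 5 - 1068040 * t ^ 4 - 1508370 * t ^ 3 - 2581955 * t ^ 2 - 2087010 * t - 1885124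

/-- The polynomial `S7`. -/
def S7 {K : Type*} [Field K] (t : K) : K := t ^ 10 + 10 * t ^ 8 + 35 * t ^ 6 - 12 * t ^ 5 + 50 * t ^ 4 - 60 * t ^ 3 + 25 * t ^ 2 - 60 * t + 16

/-- The polynomial `S8`. -/
def S8 {K : Type*} [Field K] (t : K) : K := t ^ 4 + 3 * t ^ 2 + 1

/-- The polynomial `S9`. -/
def S9 {K : Type*} [Field K] (t : K) : K := t ^ 10 + 10 * t ^ 8 + 35 * t ^ 6 - 18 * t ^ 5 + 50 * t ^ 4 - 90 * t ^ 3 + 25 * t ^ 2 - 90 * t + 76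

/-- The curve `C_{25,1}(t,d)`. -/
def C251 {K : Type*} [Field K] (t d : K) : WeierstrassCurve K :=
  { a₁ := 0, a₂ := 0, a₃ := 0,
    a₄ := -27 * d ^ 2 * S2 t * S4 t,
    a₆ := -54 * d ^ 3 * S2 t ^ 2 * S5 t * S6 t }

/-- The curve `C_{25,3}(t,d)`. -/
def C253 {K : Type*} [Field K] (t d : K) : WeierstrassCurve K :=
  { a₁ := 0, a₂ := 0, a₃ := 0,
    a₄ := -10546875 * d ^ 2 * S2 t * S7 t,
    a₆ := -13183593750 * d ^ 3 * S2 t ^ 2 * S8 t * S9 t }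

/-!
At `t = 1 + √5` both curves are in short normal form and `C_{25,3}(t,1)` is the quadratic twist of
`C_{25,1}(t,1)` by `-25`: its `a₄` is `25²` times, its `a₆` is `(-25)³` times that of `C_{25,1}(t,1)`.
A twist by `d` multiplies `Δ` by `d⁶` and `c₄` by `d²`, which gives the discriminant relation and
the equality of `j`-invariants. Away from characteristics 2 and 3 an isomorphism between curves in
short normal form is a scaling `(x, y) ↦ (u²x, u³y)`, and as `a₄a₆ ≠ 0` such a scaling realises the
twist by `d` only if `d = u⁻²`. But `-25` is not a square in the real quadratic field `ℚ(√5)`.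
-/

namespace WeierstrassCurve

variable {K : Type*} [Field K]

/-- For `W` in short normal form this is its quadratic twist `d y² = x³ + a₄ x + a₆` by `d`,
put back into short normal form by `(x, y) ↦ (d x, d² y)`. -/
def quadraticTwist (W : WeierstrassCurve K) (d : K) : WeierstrassCurve K :=
  { a₁ := 0, a₂ := 0, a₃ := 0, a₄ := d ^ 2 * W.a₄, a₆ := d ^ 3 * W.a₆ }

variable (W : WeierstrassCurve K) (d : K)

instance isShortNF_quadraticTwist : (W.quadraticTwist d).IsShortNF := ⟨rfl, rfl, rfl⟩

variable [W.IsShortNF]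

theorem Δ_quadraticTwist : (W.quadraticTwist d).Δ = d ^ 6 * W.Δ := by
  rw [Δ_of_isShortNF, Δ_of_isShortNF]
  simp only [quadraticTwist]
  ring

theorem c₄_quadraticTwist : (W.quadraticTwist d).c₄ = d ^ 2 * W.c₄ := by
  rw [c₄_of_isShortNF, c₄_of_isShortNF]
  simp only [quadraticTwist]
  ring

theorem c₄_pow_three_div_Δ_quadraticTwist (hd : d ≠ 0) :
    (W.quadraticTwist d).c₄ ^ 3 / (W.quadraticTwist d).Δ = W.c₄ ^ 3 / W.Δ := by
  rw [c₄_quadraticTwist, Δ_quadraticTwist, mul_pow, ← pow_mul]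
  exact mul_div_mul_left _ _ (pow_ne_zero _ hd)

theorem a₄_a₆_of_smul_eq_of_isShortNF [NeZero (2 : K)] [NeZero (3 : K)]
    {W' : WeierstrassCurve K} [W'.IsShortNF] {C : VariableChange K} (h : C • W = W') :
    W'.a₄ = C.u⁻¹ ^ 4 * W.a₄ ∧ W'.a₆ = C.u⁻¹ ^ 6 * W.a₆ := by
  have hu : ((C.u⁻¹ : Kˣ) : K) ≠ 0 := C.u⁻¹.ne_zero
  have hs : C.s = 0 := by
    have h₁ := congrArg a₁ h
    rw [variableChange_a₁, a₁_of_isShortNF, a₁_of_isShortNF, zero_add] at h₁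
    simpa [hu, NeZero.ne] using h₁
  have hr : C.r = 0 := by
    have h₂ := congrArg a₂ h
    rw [variableChange_a₂, a₂_of_isShortNF, a₂_of_isShortNF, a₁_of_isShortNF, hs] at h₂
    simpa [hu, NeZero.ne] using h₂
  have ht : C.t = 0 := by
    have h₃ := congrArg a₃ h
    rw [variableChange_a₃, a₃_of_isShortNF, a₃_of_isShortNF, a₁_of_isShortNF, hr] at h₃
    simpa [hu, NeZero.ne] using h₃
  rw [← h, variableChange_a₄, variableChange_a₆]
  simp [hs, hr, ht]

theorem isSquare_of_smul_eq_quadraticTwist [NeZero (2 : K)] [NeZero (3 : K)]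
    (ha₄ : W.a₄ ≠ 0) (ha₆ : W.a₆ ≠ 0) {C : VariableChange K}
    (h : C • W = W.quadraticTwist d) : IsSquare d := by
  obtain ⟨h₄, h₆⟩ := W.a₄_a₆_of_smul_eq_of_isShortNF h
  set v : K := ((C.u⁻¹ : Kˣ) : K)
  have hd₂ : d ^ 2 = v ^ 4 := mul_right_cancel₀ ha₄ (h₄ : d ^ 2 * W.a₄ = v ^ 4 * W.a₄)
  have hd₃ : d ^ 3 = v ^ 6 := mul_right_cancel₀ ha₆ (h₆ : d ^ 3 * W.a₆ = v ^ 6 * W.a₆)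
  rcases eq_or_ne d 0 with rfl | hd
  · exact IsSquare.zero
  refine ⟨v, mul_left_cancel₀ (pow_ne_zero 2 hd) ?_⟩
  linear_combination hd₃ - v ^ 2 * hd₂

end WeierstrassCurve

section QuadraticField

variable {K : Type*} [Field K] [CharZero K] {d : ℚ} {s : K}

theorem Rat.cast_add_mul_ne_zero (hd : ¬IsSquare d) (hs : s ^ 2 = d) {a b : ℚ} (hb : b ≠ 0) :
    (a : K) + b * s ≠ 0 := by
  intro h
  have hs' : s = ((-a / b : ℚ) : K) := by
    push_cast
    field_simp
    linear_combination h
  refine hd ⟨-a / b, Rat.cast_injective (α := K) ?_⟩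
  push_cast
  rw [← hs, hs', sq]
  push_cast
  ring

theorem not_isSquare_neg_ratCast (hd : ¬IsSquare d) (hd₀ : 0 ≤ d) (hs : s ^ 2 = d)
    (hgen : ∀ x : K, ∃ a b : ℚ, x = a + b * s) {q : ℚ} (hq : 0 < q) : ¬IsSquare (-(q : K)) := by
  rintro ⟨x, hx⟩
  obtain ⟨a, b, rfl⟩ := hgen x
  have hsum : ((a ^ 2 + d * b ^ 2 + q : ℚ) : K) + (2 * a * b : ℚ) * s = 0 := by
    push_cast
    linear_combination -(b : K) ^ 2 * hs - hx
  have hab : 2 * a * b = 0 := by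
    by_contra hab
    exact Rat.cast_add_mul_ne_zero hd hs hab hsum
  rw [hab, Rat.cast_zero, zero_mul, add_zero, Rat.cast_eq_zero] at hsum
  nlinarith [sq_nonneg a, sq_nonneg b]

end QuadraticField

instance isShortNF_C251 {K : Type*} [Field K] (t d : K) : (C251 t d).IsShortNF := ⟨rfl, rfl, rfl⟩

section OneAddSqrtFive

variable {K : Type*} [Field K] {s : K}

theorem C251_one_add_a₄ (hs : s ^ 2 = 5) :
    (C251 (1 + s) 1).a₄ = -4050000 * (8620 + 3849 * s) := by
  simp only [C251, S2, S4]
  grind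

theorem C251_one_add_a₆ (hs : s ^ 2 = 5) :
    (C251 (1 + s) 1).a₆ = 1020600000000 * (3475 + 1554 * s) := by
  simp only [C251, S2, S5, S6]
  grind

theorem C251_one_add_Δ (hs : s ^ 2 = 5) :
    (C251 (1 + s) 1).Δ = 21257640000000000000000 * (20 + 9 * s) := by
  rw [WeierstrassCurve.Δ_of_isShortNF, C251_one_add_a₄ hs, C251_one_add_a₆ hs]
  grind

theorem C253_one_add_eq_quadraticTwist (hs : s ^ 2 = 5) :
    C253 (1 + s) 1 = (C251 (1 + s) 1).quadraticTwist (-25) := by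
  simp only [C253, C251, WeierstrassCurve.quadraticTwist, WeierstrassCurve.mk.injEq, true_and,
    S2, S4, S5, S6, S7, S8, S9]
  constructor <;> grind

end OneAddSqrtFive

theorem stmt14 {K : Type*} [Field K] [CharZero K] (s : K) (hs : s ^ 2 = 5)
    (hgen : ∀ x : K, ∃ a b : ℚ, x = (a : K) + (b : K) * s) :
    (C251 (1 + s) 1).Δ ≠ 0 ∧ (C253 (1 + s) 1).Δ ≠ 0 ∧
    5 ^ 12 * (C251 (1 + s) 1).Δ = (C253 (1 + s) 1).Δ ∧
    (C251 (1 + s) 1).c₄ ^ 3 / (C251 (1 + s) 1).Δ =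
      (C253 (1 + s) 1).c₄ ^ 3 / (C253 (1 + s) 1).Δ ∧
    ¬ ∃ C : WeierstrassCurve.VariableChange K,
        C • (C251 (1 + s) 1) = C253 (1 + s) 1 := by
  have hsQ : s ^ 2 = ((5 : ℚ) : K) := by rw [hs, Rat.cast_ofNat]
  have h5 : ¬IsSquare (5 : ℚ) := by norm_num
  have hlin : ∀ a b : ℚ, b ≠ 0 → (a : K) + b * s ≠ 0 := fun a b hb =>
    Rat.cast_add_mul_ne_zero h5 hsQ hb
  have hΔ : (C251 (1 + s) 1).Δ ≠ 0 := by
    rw [C251_one_add_Δ hs]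
    exact mul_ne_zero (by norm_num) (by exact_mod_cast hlin 20 9 (by norm_num))
  have ha₄ : (C251 (1 + s) 1).a₄ ≠ 0 := by
    rw [C251_one_add_a₄ hs]
    exact mul_ne_zero (by norm_num) (by exact_mod_cast hlin 8620 3849 (by norm_num))
  have ha₆ : (C251 (1 + s) 1).a₆ ≠ 0 := by
    rw [C251_one_add_a₆ hs]
    exact mul_ne_zero (by norm_num) (by exact_mod_cast hlin 3475 1554 (by norm_num))
  have hsq : ¬IsSquare (-25 : K) := by
    exact_mod_cast not_isSquare_neg_ratCast h5 (by norm_num) hsQ hgen (q := 25) (by norm_num)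
  rw [C253_one_add_eq_quadraticTwist hs,
    WeierstrassCurve.c₄_pow_three_div_Δ_quadraticTwist _ _ (by norm_num),
    WeierstrassCurve.Δ_quadraticTwist]
  refine ⟨hΔ, mul_ne_zero (by norm_num) hΔ, by norm_num, rfl, ?_⟩
  rintro ⟨C, hC⟩
  exact hsq (WeierstrassCurve.isSquare_of_smul_eq_quadraticTwist _ _ ha₄ ha₆ hC)
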